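/- Let Λ = (λ^0,…,λ^{k-1}) be a tuple of partitions with total size n/k. Then (1/(1-t^k)^{n/k-1}) · Σ_{𝒯 ∈ SYT-tuples(Λ)} t^{k·|DES(𝒯)| + idx₁(𝒯)} = Σ_{𝔗 ∈ SSYT-tuples(Λ)} t^{k·(max(𝔗)-1) + idx₁(𝔗)}, as formal power series in t. -/

import Mathlib

open Finset Polynomial PowerSeries
open scoped Classical

namespace BorderStrips

/-- Two cells of a Young diagram are adjacent if they share an edge. -/
def Adj (x y : ℕ × ℕ) : Prop :=
  (x.1 = y.1 ∧ (x.2 = y.2 + 1 ∨ y.2 = x.2 + 1)) ∨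
  (x.2 = y.2 ∧ (x.1 = y.1 + 1 ∨ y.1 = x.1 + 1))

/-- A set of cells is connected: any two cells are joined by a path of adjacent cells. -/
def ConnectedCells (S : Finset (ℕ × ℕ)) : Prop :=
  ∀ x ∈ S, ∀ y ∈ S, Relation.ReflTransGen (fun a b => a ∈ S ∧ b ∈ S ∧ Adj a b) x y

/-- A set of cells contains no 2×2 square. -/
def NoTwoByTwo (S : Finset (ℕ × ℕ)) : Prop :=
  ¬ ∃ i j : ℕ, (i, j) ∈ S ∧ (i + 1, j) ∈ S ∧ (i, j + 1) ∈ S ∧ (i + 1, j + 1) ∈ S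

/-- `mu ⊆ lam` and `lam \ mu` is a border strip (connected, no 2×2 square) of size `k`. -/
def IsBorderStripOfSize (k : ℕ) (mu lam : YoungDiagram) : Prop :=
  mu.cells ⊆ lam.cells ∧ (lam.cells \ mu.cells).card = k ∧
    ConnectedCells (lam.cells \ mu.cells) ∧ NoTwoByTwo (lam.cells \ mu.cells)

/-- Height of a strip: number of rows spanned minus one. -/
def stripHeight (S : Finset (ℕ × ℕ)) : ℕ := (S.image Prod.fst).card - 1

/-- Content of a cell: column minus row. -/
def contentZ (x : ℕ × ℕ) : ℤ := (x.2 : ℤ) - (x.1 : ℤ)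

/-- A tail of a strip: a cell of minimal content. -/
def IsTail (S : Finset (ℕ × ℕ)) (x : ℕ × ℕ) : Prop :=
  x ∈ S ∧ ∀ y ∈ S, contentZ x ≤ contentZ y

noncomputable def tailCell (S : Finset (ℕ × ℕ)) : ℕ × ℕ :=
  if h : ∃ x, IsTail S x then h.choose else (0, 0)

/-- A border strip tableau of shape `lam` with `m` strips, each of size `k`,
viewed as a flag of Young diagrams. (For `k = 1`, `m = |lam|` these are exactly
the standard Young tableaux of shape `lam`.) -/
structure BST (lam : YoungDiagram) (k m : ℕ) where
  flag : Fin (m + 1) → YoungDiagram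
  first : flag 0 = ⊥
  last : flag (Fin.last m) = lam
  strips : ∀ i : Fin m, IsBorderStripOfSize k (flag i.castSucc) (flag i.succ)

namespace BST

variable {lam : YoungDiagram} {k m : ℕ}

def flagAt (B : BST lam k m) (i : ℕ) : YoungDiagram :=
  B.flag ⟨min i m, by omega⟩

/-- The cells of the strip labelled `i` (labels are 1-based). -/
def stripCells (B : BST lam k m) (i : ℕ) : Finset (ℕ × ℕ) :=
  (B.flagAt i).cells \ (B.flagAt (i - 1)).cells

/-- The height of a border strip tableau: sum of the heights of its strips. -/
def height (B : BST lam k m) : ℕ :=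
  ∑ i ∈ Finset.Icc 1 m, stripHeight (B.stripCells i)

/-- `i` is a descent of `B` if the tail of strip `i+1` lies in a strictly lower
row than the tail of strip `i`. -/
noncomputable def DES (B : BST lam k m) : Finset ℕ :=
  (Finset.Icc 1 (m - 1)).filter fun i =>
    (tailCell (B.stripCells i)).1 < (tailCell (B.stripCells (i + 1))).1

/-- Major index: sum of the descents. -/
noncomputable def maj (B : BST lam k m) : ℕ := ∑ i ∈ B.DES, i

end BST

/-- No border strip of size `k` can be removed from `lam`. -/
def NoRemovableStrip (k : ℕ) (lam : YoungDiagram) : Prop :=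
  ¬ ∃ mu : YoungDiagram, IsBorderStripOfSize k mu lam

/-- `lam` has empty `k`-core: removing border strips of size `k` as long as
possible always terminates at the empty diagram. -/
def EmptyKCore (k : ℕ) (lam : YoungDiagram) : Prop :=
  ∀ mu : YoungDiagram,
    Relation.ReflTransGen (fun a b => IsBorderStripOfSize k b a) lam mu →
    NoRemovableStrip k mu → mu = ⊥

/-- Number of rows after padding to a multiple of `k`. -/
def numRowsPad (k : ℕ) (lam : YoungDiagram) : ℕ :=
  k * ((lam.colLen 0 + k - 1) / k)

/-- The beta-set (first column hook lengths after padding): the positions of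
the east steps in the contour path of `lam`. -/
def betaSet (k : ℕ) (lam : YoungDiagram) : Finset ℕ :=
  (Finset.range (numRowsPad k lam)).image fun i =>
    lam.rowLen i + (numRowsPad k lam - 1 - i)

/-- The cells of the partition encoded by a beta-set `S`: the element `b` of
rank `r` from the top (i.e. with `r` larger elements) gives a row of length
`b` minus the number of smaller elements. -/
def cellsOfBetaSet (S : Finset ℕ) : Finset (ℕ × ℕ) :=
  S.biUnion fun b =>
    (Finset.range (b - (S.filter fun b' => b' < b).card)).image
      fun j => ((S.filter fun b' => b < b').card, j)

/-- The `s`-th component of the `k`-quotient of `lam` (as a set of cells):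
obtained from the steps of the contour path whose labels are `≡ s (mod k)`. -/
def kQuotientCells (k : ℕ) (lam : YoungDiagram) (s : Fin k) : Finset (ℕ × ℕ) :=
  cellsOfBetaSet (((betaSet k lam).filter fun b => b % k = (s : ℕ)).image fun b => b / k)

/-- Hook length of a cell in a cell set: arm + leg + 1. -/
def hookFin (s : Finset (ℕ × ℕ)) (x : ℕ × ℕ) : ℕ :=
  (s.filter fun y => y.1 = x.1 ∧ x.2 < y.2).card +
  (s.filter fun y => y.2 = x.2 ∧ x.1 < y.1).card + 1

def hookMultiset (s : Finset (ℕ × ℕ)) : Multiset ℕ := s.val.map (hookFin s)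

def contentMultiset (s : Finset (ℕ × ℕ)) : Multiset ℤ := s.val.map contentZ

/-- A semistandard filling of a cell set (entries 0-based): rows weakly
increasing, columns strictly increasing, zero outside. -/
def IsSsyt (s : Finset (ℕ × ℕ)) (f : ℕ × ℕ → ℕ) : Prop :=
  (∀ i j1 j2, j1 ≤ j2 → (i, j1) ∈ s → (i, j2) ∈ s → f (i, j1) ≤ f (i, j2)) ∧
  (∀ i1 i2 j, i1 < i2 → (i1, j) ∈ s → (i2, j) ∈ s → f (i1, j) < f (i2, j)) ∧
  (∀ x, x ∉ s → f x = 0)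

/-- The principal specialisation `s_lam(1, q, …, q^(m-1))` (so `m` variables):
sum over semistandard tableaux with entries `< m` of `q ^ (sum of entries)`. -/
noncomputable def schurSpec (lam : YoungDiagram) (m : ℕ) (q : ℂ) : ℂ :=
  ∑ᶠ f : {f : ℕ × ℕ → ℕ // IsSsyt lam.cells f ∧ ∀ x ∈ lam.cells, f x < m},
    q ^ (∑ x ∈ lam.cells, f.1 x)

/-- `s_lam(1, q, …, q^m)` as a polynomial in `q`. -/
noncomputable def schurPoly (lam : YoungDiagram) (m : ℕ) : Polynomial ℤ :=
  ∑ᶠ f : {f : ℕ × ℕ → ℕ // IsSsyt lam.cells f ∧ ∀ x ∈ lam.cells, f x ≤ m},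
    Polynomial.X ^ (∑ x ∈ lam.cells, f.1 x)

/-- `s_lam(1^m)`: the number of semistandard tableaux with entries `< m`
(i.e. with entries in `{1, …, m}` in 1-based convention). -/
noncomputable def ssytCount (s : Finset (ℕ × ℕ)) (m : ℕ) : ℕ :=
  Nat.card {f : ℕ × ℕ → ℕ // IsSsyt s f ∧ ∀ x ∈ s, f x < m}

variable {k : ℕ}

/-- A standard Young tableau tuple: a bijective filling of the cells of the
tuple `Λ` with `1, …, ℓ`, strictly increasing along rows and columns. -/
def IsSYTTuple (Λ : Fin k → Finset (ℕ × ℕ)) (f : Fin k → ℕ × ℕ → ℕ) : Prop :=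
  (∀ s x, x ∉ Λ s → f s x = 0) ∧
  (∀ s x, x ∈ Λ s → f s x ∈ Finset.Icc 1 (∑ t, (Λ t).card)) ∧
  (∀ v ∈ Finset.Icc 1 (∑ t, (Λ t).card),
    ∃! p : Fin k × ℕ × ℕ, p.2 ∈ Λ p.1 ∧ f p.1 p.2 = v) ∧
  (∀ s i j1 j2, j1 < j2 → (i, j1) ∈ Λ s → (i, j2) ∈ Λ s → f s (i, j1) < f s (i, j2)) ∧
  (∀ s i1 i2 j, i1 < i2 → (i1, j) ∈ Λ s → (i2, j) ∈ Λ s → f s (i1, j) < f s (i2, j))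

/-- A semistandard Young tableau tuple (entries 1-based, zero outside). -/
def IsSSYTTuple (Λ : Fin k → Finset (ℕ × ℕ)) (f : Fin k → ℕ × ℕ → ℕ) : Prop :=
  (∀ s x, x ∉ Λ s → f s x = 0) ∧
  (∀ s x, x ∈ Λ s → 1 ≤ f s x) ∧
  (∀ s i j1 j2, j1 ≤ j2 → (i, j1) ∈ Λ s → (i, j2) ∈ Λ s → f s (i, j1) ≤ f s (i, j2)) ∧
  (∀ s i1 i2 j, i1 < i2 → (i1, j) ∈ Λ s → (i2, j) ∈ Λ s → f s (i1, j) < f s (i2, j))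

/-- `v` is a descent of the tuple filling `f`: with `v` in tableau `s` and `v+1`
in tableau `t`, either `s ≤ t` and `c(v) > c(v+1)`, or `s > t` and `c(v) ≥ c(v+1)`. -/
def TupleDescent (Λ : Fin k → Finset (ℕ × ℕ)) (f : Fin k → ℕ × ℕ → ℕ) (v : ℕ) : Prop :=
  ∃ (s t : Fin k) (x y : ℕ × ℕ), x ∈ Λ s ∧ y ∈ Λ t ∧ f s x = v ∧ f t y = v + 1 ∧
    ((s ≤ t ∧ contentZ y < contentZ x) ∨ (t < s ∧ contentZ y ≤ contentZ x))

noncomputable def tupleDES (Λ : Fin k → Finset (ℕ × ℕ)) (f : Fin k → ℕ × ℕ → ℕ) : Finset ℕ :=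
  (Finset.range (∑ t, (Λ t).card)).filter fun v => TupleDescent Λ f v

/-- `idx₁ = k - 1 - s` where `s` is the index of the leftmost tableau containing
an entry equal to `1`. -/
noncomputable def idxOne (Λ : Fin k → Finset (ℕ × ℕ)) (f : Fin k → ℕ × ℕ → ℕ) : ℕ :=
  k - 1 - sInf {s : ℕ | ∃ hs : s < k, ∃ x ∈ Λ ⟨s, hs⟩, f ⟨s, hs⟩ x = 1}

def maxEntry (Λ : Fin k → Finset (ℕ × ℕ)) (f : Fin k → ℕ × ℕ → ℕ) : ℕ :=
  Finset.univ.sup fun s => (Λ s).sup fun x => f s x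

/-- The map `φ`: the cell of `𝒯` containing `s` receives the entry
`1 + d_s + α_1 + ⋯ + α_(s-1)`. -/
noncomputable def phi (Λ : Fin k → Finset (ℕ × ℕ))
    (p : (ℕ → ℕ) × (Fin k → ℕ × ℕ → ℕ)) : Fin k → ℕ × ℕ → ℕ :=
  fun s x =>
    if x ∈ Λ s then
      1 + ((Finset.range (p.2 s x)).filter fun v => TupleDescent Λ p.2 v).card +
        ∑ u ∈ Finset.range (p.2 s x), p.1 u
    else 0

/-- The Young diagram of the partition (2,2,2). -/
def lam222 : YoungDiagram :=
  ⟨Finset.range 3 ×ˢ Finset.range 2, by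
    intro x y h hx
    simp only [Finset.coe_product, Finset.coe_range, Set.mem_prod, Set.mem_Iio] at hx ⊢
    exact ⟨lt_of_le_of_lt h.1 hx.1, lt_of_le_of_lt h.2 hx.2⟩⟩
section Aux

variable {k : ℕ}

/-- Cells of a tuple of shapes, as a sigma type. -/
abbrev CellT (k : ℕ) := (_ : Fin k) × (ℕ × ℕ)

def cellsF (Λ : Fin k → Finset (ℕ × ℕ)) : Finset (CellT k) :=
  Finset.univ.sigma fun s => Λ s

lemma mem_cellsF {Λ : Fin k → Finset (ℕ × ℕ)} {p : CellT k} :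
    p ∈ cellsF Λ ↔ p.2 ∈ Λ p.1 := by
  simp [cellsF]

lemma card_cellsF (Λ : Fin k → Finset (ℕ × ℕ)) :
    (cellsF Λ).card = ∑ s, (Λ s).card := Finset.card_sigma _ _

/-- The content-and-index key of a cell. -/
def ckey (p : CellT k) : Lex (ℤ × ℕ) := toLex (contentZ p.2, (p.1 : ℕ))

/-- The (value, content, index) key of a cell w.r.t. a filling. -/
def key (g : Fin k → ℕ × ℕ → ℕ) (p : CellT k) : Lex (ℕ × Lex (ℤ × ℕ)) :=
  toLex (g p.1 p.2, ckey p)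

lemma key_lt_iff {g : Fin k → ℕ × ℕ → ℕ} {p q : CellT k} :
    key g p < key g q ↔
      g p.1 p.2 < g q.1 q.2 ∨ (g p.1 p.2 = g q.1 q.2 ∧ ckey p < ckey q) :=
  Prod.Lex.lt_iff

lemma descCond_iff {s t : Fin k} {x y : ℕ × ℕ} :
    ((s ≤ t ∧ contentZ y < contentZ x) ∨ (t < s ∧ contentZ y ≤ contentZ x)) ↔
      ckey (⟨t, y⟩ : CellT k) < ckey (⟨s, x⟩ : CellT k) := by
  rw [ckey, ckey, Prod.Lex.lt_iff]
  simp only [Fin.le_def, Fin.lt_def] at *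
  constructor
  · rintro (⟨hst, hc⟩ | ⟨hts, hc⟩)
    · exact Or.inl hc
    · rcases lt_or_eq_of_le hc with h | h
      · exact Or.inl h
      · exact Or.inr ⟨h, hts⟩
  · rintro (hc | ⟨hc, hts⟩)
    · rcases le_or_gt (s : ℕ) (t : ℕ) with h | h
      · exact Or.inl ⟨h, hc⟩
      · exact Or.inr ⟨h, le_of_lt hc⟩
    · exact Or.inr ⟨hts, le_of_eq hc⟩

/-- Reformulation of `TupleDescent` via `ckey`. -/
lemma tupleDescent_iff (Λ : Fin k → Finset (ℕ × ℕ)) (f : Fin k → ℕ × ℕ → ℕ) (v : ℕ) :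
    TupleDescent Λ f v ↔
      ∃ p q : CellT k, p ∈ cellsF Λ ∧ q ∈ cellsF Λ ∧
        f p.1 p.2 = v ∧ f q.1 q.2 = v + 1 ∧ ckey q < ckey p := by
  constructor
  · rintro ⟨s, t, x, y, hx, hy, hfx, hfy, hcond⟩
    exact ⟨⟨s, x⟩, ⟨t, y⟩, mem_cellsF.2 hx, mem_cellsF.2 hy, hfx, hfy,
      descCond_iff.1 hcond⟩
  · rintro ⟨⟨s, x⟩, ⟨t, y⟩, hp, hq, hfx, hfy, hlt⟩
    exact ⟨s, t, x, y, mem_cellsF.1 hp, mem_cellsF.1 hq, hfx, hfy,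
      descCond_iff.2 hlt⟩

end Aux
section SYTside

variable {k : ℕ} (hk : 0 < k) (Λ : Fin k → Finset (ℕ × ℕ))

/-- Total number of cells. -/
def tot (Λ : Fin k → Finset (ℕ × ℕ)) : ℕ := ∑ t, (Λ t).card

variable {f : Fin k → ℕ × ℕ → ℕ}

lemma f_mem_Icc (hf : IsSYTTuple Λ f) {p : CellT k} (hp : p ∈ cellsF Λ) :
    f p.1 p.2 ∈ Finset.Icc 1 (tot Λ) :=
  hf.2.1 p.1 p.2 (mem_cellsF.1 hp)

/-- The unique cell with value `v`. -/
noncomputable def cellOf (f : Fin k → ℕ × ℕ → ℕ) (v : ℕ) : CellT k :=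
  if h : ∃ p : CellT k, p ∈ cellsF Λ ∧ f p.1 p.2 = v then h.choose
  else ⟨⟨0, hk⟩, (0, 0)⟩

variable {hk} {Λ}

lemma cellOf_spec (hf : IsSYTTuple Λ f) {v : ℕ} (hv : v ∈ Finset.Icc 1 (tot Λ)) :
    cellOf hk Λ f v ∈ cellsF Λ ∧ f (cellOf hk Λ f v).1 (cellOf hk Λ f v).2 = v := by
  obtain ⟨p, hp, -⟩ := hf.2.2.1 v hv
  have h : ∃ q : CellT k, q ∈ cellsF Λ ∧ f q.1 q.2 = v :=
    ⟨⟨p.1, p.2⟩, mem_cellsF.2 hp.1, hp.2⟩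
  rw [cellOf, dif_pos h]
  exact h.choose_spec

lemma cellOf_unique (hf : IsSYTTuple Λ f) {v : ℕ} (hv : v ∈ Finset.Icc 1 (tot Λ))
    {p : CellT k} (hp : p ∈ cellsF Λ) (hfp : f p.1 p.2 = v) :
    p = cellOf hk Λ f v := by
  obtain ⟨q, hq, huniq⟩ := hf.2.2.1 v hv
  have h1 : (p.1, p.2) = q := huniq (p.1, p.2) ⟨mem_cellsF.1 hp, hfp⟩
  obtain ⟨hc, hfc⟩ := cellOf_spec (hk := hk) hf hv
  have h2 : ((cellOf hk Λ f v).1, (cellOf hk Λ f v).2) = q :=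
    huniq _ ⟨mem_cellsF.1 hc, hfc⟩
  have h3 := h1.trans h2.symm
  exact Sigma.ext (congrArg Prod.fst h3) (heq_of_eq (congrArg Prod.snd h3))

lemma f_injOn (hf : IsSYTTuple Λ f) {p q : CellT k} (hp : p ∈ cellsF Λ)
    (hq : q ∈ cellsF Λ) (hfe : f p.1 p.2 = f q.1 q.2) : p = q := by
  have hk : 0 < k := p.1.pos
  have hv := f_mem_Icc Λ hf hq
  exact (cellOf_unique (hk := hk) hf hv hp hfe).trans
    (cellOf_unique (hk := hk) hf hv hq rfl).symm

lemma desc_bounds (hf : IsSYTTuple Λ f) {v : ℕ} (hd : TupleDescent Λ f v) :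
    1 ≤ v ∧ v + 1 ≤ tot Λ := by
  obtain ⟨s, t, x, y, hx, hy, hfx, hfy, -⟩ := hd
  have h1 := hf.2.1 s x hx
  have h2 := hf.2.1 t y hy
  rw [hfx] at h1; rw [hfy] at h2
  simp only [Finset.mem_Icc] at h1 h2
  exact ⟨h1.1, h2.2⟩

lemma desc_iff (hf : IsSYTTuple Λ f) {v : ℕ} (h1 : 1 ≤ v) (h2 : v + 1 ≤ tot Λ) :
    TupleDescent Λ f v ↔
      ckey (cellOf hk Λ f (v + 1)) < ckey (cellOf hk Λ f v) := by
  have hv : v ∈ Finset.Icc 1 (tot Λ) := Finset.mem_Icc.2 ⟨h1, by omega⟩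
  have hv1 : v + 1 ∈ Finset.Icc 1 (tot Λ) := Finset.mem_Icc.2 ⟨by omega, h2⟩
  rw [tupleDescent_iff]
  constructor
  · rintro ⟨p, q, hp, hq, hfp, hfq, hlt⟩
    rwa [cellOf_unique (hk := hk) hf hv hp hfp,
      cellOf_unique (hk := hk) hf hv1 hq hfq] at hlt
  · intro hlt
    exact ⟨_, _, (cellOf_spec (hk := hk) hf hv).1, (cellOf_spec (hk := hk) hf hv1).1,
      (cellOf_spec (hk := hk) hf hv).2, (cellOf_spec (hk := hk) hf hv1).2, hlt⟩

lemma ckey_chain (hf : IsSYTTuple Λ f) {v w : ℕ} (h1 : 1 ≤ v) (hvw : v ≤ w)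
    (hw : w ≤ tot Λ) (hnd : ∀ u, v ≤ u → u < w → ¬ TupleDescent Λ f u) :
    ckey (cellOf hk Λ f v) ≤ ckey (cellOf hk Λ f w) := by
  induction w, hvw using Nat.le_induction with
  | base => exact le_refl _
  | succ w hvw ih =>
    refine le_trans (ih (by omega) fun u hu hu' => hnd u hu (by omega)) ?_
    have := (desc_iff (hk := hk) hf (by omega) hw).not.1 (hnd w hvw (by omega))
    exact le_of_not_gt this

lemma f00_le (hΛ : ∀ s, IsLowerSet (↑(Λ s) : Set (ℕ × ℕ))) (hf : IsSYTTuple Λ f)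
    {s : Fin k} {x : ℕ × ℕ} (hx : x ∈ Λ s) :
    (0, 0) ∈ Λ s ∧ f s (0, 0) ≤ f s x := by
  obtain ⟨i, j⟩ := x
  have h0j : (0, j) ∈ Λ s := hΛ s (Prod.mk_le_mk.2 ⟨Nat.zero_le _, le_refl _⟩) hx
  have h00 : (0, 0) ∈ Λ s := hΛ s (Prod.mk_le_mk.2 ⟨le_refl _, Nat.zero_le _⟩) h0j
  refine ⟨h00, ?_⟩
  have step1 : f s (0, 0) ≤ f s (0, j) := by
    rcases Nat.eq_zero_or_pos j with hj | hj
    · subst hj; exact le_refl _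
    · exact le_of_lt (hf.2.2.2.1 s 0 0 j hj h00 h0j)
  have step2 : f s (0, j) ≤ f s (i, j) := by
    rcases Nat.eq_zero_or_pos i with hi | hi
    · subst hi; exact le_refl _
    · exact le_of_lt (hf.2.2.2.2 s 0 i j hi h0j hx)
  exact le_trans step1 step2

lemma cellOf_one_row (hΛ : ∀ s, IsLowerSet (↑(Λ s) : Set (ℕ × ℕ)))
    (hf : IsSYTTuple Λ f) (hpos : 1 ≤ tot Λ) :
    (cellOf hk Λ f 1).2.1 = 0 := by
  obtain ⟨hmem, hval⟩ := cellOf_spec (hk := hk) hf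
    (Finset.mem_Icc.2 ⟨le_refl _, hpos⟩)
  rcases hcell : cellOf hk Λ f 1 with ⟨s, i, j⟩
  rw [hcell] at hmem hval
  simp only [mem_cellsF] at hmem
  by_contra h
  simp only at h hval hmem ⊢
  have h00 : (i - 1, j) ∈ Λ s :=
    hΛ s (Prod.mk_le_mk.2 ⟨by omega, le_refl _⟩) hmem
  have hlt := hf.2.2.2.2 s (i - 1) i j (by omega) h00 hmem
  have hge := hf.2.1 s (i - 1, j) h00
  simp only [Finset.mem_Icc] at hge
  rw [hval] at hlt
  omega

end SYTside
section Phi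

variable {k : ℕ} {Λ : Fin k → Finset (ℕ × ℕ)}

/-- Number of descents below `v`. -/
noncomputable def Dd (Λ : Fin k → Finset (ℕ × ℕ)) (f : Fin k → ℕ × ℕ → ℕ) (v : ℕ) : ℕ :=
  ((Finset.range v).filter fun u => TupleDescent Λ f u).card

/-- The entry of `φ` at the cell of value `v`. -/
noncomputable def Ee (Λ : Fin k → Finset (ℕ × ℕ)) (α' : ℕ → ℕ)
    (f : Fin k → ℕ × ℕ → ℕ) (v : ℕ) : ℕ :=
  1 + Dd Λ f v + ∑ u ∈ Finset.range v, α' u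

variable {α' : ℕ → ℕ} {f : Fin k → ℕ × ℕ → ℕ}

lemma phi_apply {s : Fin k} {x : ℕ × ℕ} (hx : x ∈ Λ s) :
    phi Λ (α', f) s x = Ee Λ α' f (f s x) := by
  simp only [phi, if_pos hx, Ee, Dd]

lemma phi_apply_not {s : Fin k} {x : ℕ × ℕ} (hx : x ∉ Λ s) :
    phi Λ (α', f) s x = 0 := by
  simp only [phi, if_neg hx]

lemma Dd_mono {v w : ℕ} (hvw : v ≤ w) : Dd Λ f v ≤ Dd Λ f w :=
  Finset.card_le_card (Finset.filter_subset_filter _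
    (Finset.range_subset_range.2 hvw))

lemma Ee_mono {v w : ℕ} (hvw : v ≤ w) : Ee Λ α' f v ≤ Ee Λ α' f w := by
  have h1 := Dd_mono (Λ := Λ) (f := f) hvw
  have h2 : ∑ u ∈ Finset.range v, α' u ≤ ∑ u ∈ Finset.range w, α' u :=
    Finset.sum_le_sum_of_subset (Finset.range_subset_range.2 hvw)
  simp only [Ee]; omega

lemma Dd_lt_of_desc {v w u : ℕ} (hvu : v ≤ u) (huw : u < w)
    (hd : TupleDescent Λ f u) : Dd Λ f v < Dd Λ f w := by
  refine Finset.card_lt_card ⟨Finset.filter_subset_filter _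
    (Finset.range_subset_range.2 (by omega)), fun hsub => ?_⟩
  have hu : u ∈ (Finset.range w).filter fun u => TupleDescent Λ f u :=
    Finset.mem_filter.2 ⟨Finset.mem_range.2 huw, hd⟩
  have := Finset.mem_filter.1 (hsub hu)
  rw [Finset.mem_range] at this
  omega

lemma Ee_lt_of_desc {v w u : ℕ} (hvu : v ≤ u) (huw : u < w)
    (hd : TupleDescent Λ f u) : Ee Λ α' f v < Ee Λ α' f w := by
  have h1 := Dd_lt_of_desc (Λ := Λ) (f := f) hvu huw hd
  have h2 : ∑ u ∈ Finset.range v, α' u ≤ ∑ u ∈ Finset.range w, α' u :=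
    Finset.sum_le_sum_of_subset (Finset.range_subset_range.2 (by omega))
  simp only [Ee]; omega

lemma no_desc_of_Dd_eq {v w u : ℕ} (h : Dd Λ f v = Dd Λ f w) (hvu : v ≤ u)
    (huw : u < w) : ¬ TupleDescent Λ f u := fun hd =>
  absurd h (Nat.ne_of_lt (Dd_lt_of_desc hvu huw hd))

lemma Dd_one (hf : IsSYTTuple Λ f) : Dd Λ f 1 = 0 := by
  rw [Dd, Finset.card_eq_zero, Finset.filter_eq_empty_iff]
  intro u hu
  rw [Finset.mem_range] at hu
  intro hd
  have := desc_bounds hf hd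
  omega

lemma Ee_one (hf : IsSYTTuple Λ f) (hα0 : α' 0 = 0) : Ee Λ α' f 1 = 1 := by
  simp [Ee, Dd_one hf, hα0]

/-- Column strictness of the entries of `φ`: a descent occurs between the
values of two cells in the same column. -/
lemma Ee_col_strict (hk : 0 < k) (hf : IsSYTTuple Λ f) {s : Fin k} {i1 i2 j : ℕ}
    (hi : i1 < i2) (h1 : (i1, j) ∈ Λ s) (h2 : (i2, j) ∈ Λ s) :
    Ee Λ α' f (f s (i1, j)) < Ee Λ α' f (f s (i2, j)) := by
  set v1 := f s (i1, j) with hv1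
  set v2 := f s (i2, j) with hv2
  have hlt : v1 < v2 := hf.2.2.2.2 s i1 i2 j hi h1 h2
  have hm1 := hf.2.1 s (i1, j) h1
  have hm2 := hf.2.1 s (i2, j) h2
  simp only [Finset.mem_Icc] at hm1 hm2
  by_cases hdesc : ∃ u, v1 ≤ u ∧ u < v2 ∧ TupleDescent Λ f u
  · obtain ⟨u, hu1, hu2, hd⟩ := hdesc
    exact Ee_lt_of_desc hu1 hu2 hd
  · exfalso
    push_neg at hdesc
    have hchain := ckey_chain (hk := hk) hf hm1.1 (le_of_lt hlt) hm2.2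
      fun u hu1 hu2 => hdesc u hu1 hu2
    have hc1 : (⟨s, (i1, j)⟩ : CellT k) = cellOf hk Λ f v1 :=
      cellOf_unique hf (Finset.mem_Icc.2 hm1) (mem_cellsF.2 h1) rfl
    have hc2 : (⟨s, (i2, j)⟩ : CellT k) = cellOf hk Λ f v2 :=
      cellOf_unique hf (Finset.mem_Icc.2 hm2) (mem_cellsF.2 h2) rfl
    rw [← hc1, ← hc2] at hchain
    rw [ckey, ckey, Prod.Lex.le_iff] at hchain
    simp only [contentZ, ofLex_toLex] at hchain
    omega

/-- `φ` is a semistandard tuple. -/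
lemma phi_isSSYT (hk : 0 < k) (hf : IsSYTTuple Λ f) :
    IsSSYTTuple Λ (phi Λ (α', f)) := by
  refine ⟨fun s x hx => phi_apply_not hx, fun s x hx => ?_, ?_, ?_⟩
  · rw [phi_apply hx]; simp only [Ee]; omega
  · intro s i j1 j2 hj h1 h2
    rw [phi_apply h1, phi_apply h2]
    rcases Nat.eq_or_lt_of_le hj with hj' | hj'
    · subst hj'; exact le_refl _
    · exact Ee_mono (le_of_lt (hf.2.2.2.1 s i j1 j2 hj' h1 h2))
  · intro s i1 i2 j hi h1 h2
    rw [phi_apply h1, phi_apply h2]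
    exact Ee_col_strict hk hf hi h1 h2

lemma phi_has_one (hk : 0 < k) (hf : IsSYTTuple Λ f) (hα0 : α' 0 = 0)
    (hpos : 1 ≤ tot Λ) :
    ∃ s x, x ∈ Λ s ∧ phi Λ (α', f) s x = 1 := by
  obtain ⟨hmem, hval⟩ := cellOf_spec (hk := hk) hf
    (Finset.mem_Icc.2 ⟨le_refl _, hpos⟩)
  refine ⟨(cellOf hk Λ f 1).1, (cellOf hk Λ f 1).2, mem_cellsF.1 hmem, ?_⟩
  rw [phi_apply (mem_cellsF.1 hmem), hval, Ee_one hf hα0]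

/-- Maximal entry of `φ`. -/
lemma phi_maxEntry (hk : 0 < k) (hf : IsSYTTuple Λ f) (hpos : 1 ≤ tot Λ) :
    maxEntry Λ (phi Λ (α', f)) = Ee Λ α' f (tot Λ) := by
  apply le_antisymm
  · refine Finset.sup_le fun s _ => Finset.sup_le fun x hx => ?_
    rw [phi_apply hx]
    have := hf.2.1 s x hx
    simp only [Finset.mem_Icc] at this
    exact Ee_mono this.2
  · obtain ⟨hmem, hval⟩ := cellOf_spec (hk := hk) hf
      (Finset.mem_Icc.2 ⟨hpos, le_refl _⟩)
    have h1 : Ee Λ α' f (tot Λ) = phi Λ (α', f) (cellOf hk Λ f (tot Λ)).1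
        (cellOf hk Λ f (tot Λ)).2 := by
      rw [phi_apply (mem_cellsF.1 hmem), hval]
    rw [h1]
    refine le_trans (Finset.le_sup (f := fun x => phi Λ (α', f) (cellOf hk Λ f (tot Λ)).1 x)
      (mem_cellsF.1 hmem)) ?_
    exact Finset.le_sup (f := fun s => (Λ s).sup fun x => phi Λ (α', f) s x)
      (Finset.mem_univ _)

/-- `φ` preserves the index statistic. -/
lemma phi_idxOne (hk : 0 < k) (hΛ : ∀ s, IsLowerSet (↑(Λ s) : Set (ℕ × ℕ)))
    (hf : IsSYTTuple Λ f) (hα0 : α' 0 = 0) (hpos : 1 ≤ tot Λ) :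
    idxOne Λ (phi Λ (α', f)) = idxOne Λ f := by
  obtain ⟨hmem, hval⟩ := cellOf_spec (hk := hk) hf
    (Finset.mem_Icc.2 ⟨le_refl _, hpos⟩)
  set s₁ : ℕ := ((cellOf hk Λ f 1).1 : ℕ) with hs₁
  have hs₁k : s₁ < k := (cellOf hk Λ f 1).1.isLt
  have heta : (⟨s₁, hs₁k⟩ : Fin k) = (cellOf hk Λ f 1).1 := Fin.eta _ _
  -- the set for f is {s₁}
  have hSf : {s : ℕ | ∃ hs : s < k, ∃ x ∈ Λ ⟨s, hs⟩, f ⟨s, hs⟩ x = 1} = {s₁} := by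
    ext s
    simp only [Set.mem_setOf_eq, Set.mem_singleton_iff]
    constructor
    · rintro ⟨hs, x, hx, hfx⟩
      have h := cellOf_unique (hk := hk) hf (Finset.mem_Icc.2 ⟨le_refl _, hpos⟩)
        (p := ⟨⟨s, hs⟩, x⟩) (mem_cellsF.2 hx) hfx
      simpa using congrArg (fun p : CellT k => ((p.1 : ℕ))) h
    · rintro rfl
      exact ⟨hs₁k, (cellOf hk Λ f 1).2, by rw [heta]; exact mem_cellsF.1 hmem,
        by rw [heta]; exact hval⟩
  -- s₁ belongs to the set for φ
  have hmemφ : s₁ ∈ {s : ℕ | ∃ hs : s < k, ∃ x ∈ Λ ⟨s, hs⟩, phi Λ (α', f) ⟨s, hs⟩ x = 1} := by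
    refine ⟨hs₁k, (cellOf hk Λ f 1).2, by rw [heta]; exact mem_cellsF.1 hmem, ?_⟩
    rw [heta, phi_apply (mem_cellsF.1 hmem), hval, Ee_one hf hα0]
  -- lower bound for the set for φ
  have hlb : ∀ s ∈ {s : ℕ | ∃ hs : s < k, ∃ x ∈ Λ ⟨s, hs⟩, phi Λ (α', f) ⟨s, hs⟩ x = 1},
      s₁ ≤ s := by
    rintro s ⟨hs, x, hx, hφx⟩
    obtain ⟨h00, hle⟩ := f00_le hΛ hf hx
    have hv0m := hf.2.1 _ _ h00
    simp only [Finset.mem_Icc] at hv0m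
    set v0 := f ⟨s, hs⟩ (0, 0) with hv0
    have hφ00 : Ee Λ α' f v0 = 1 := by
      have h1 : Ee Λ α' f v0 ≤ 1 := by
        have hm := Ee_mono (Λ := Λ) (α' := α') (f := f) hle
        rw [← phi_apply hx, hφx] at hm
        exact hm
      have h2 : 1 ≤ Ee Λ α' f v0 := by
        simp only [Ee]; omega
      omega
    have hDd : Dd Λ f v0 = 0 := by
      unfold Ee at hφ00; omega
    have hchain := ckey_chain (hk := hk) hf (le_refl 1) hv0m.1 hv0m.2
      (fun u hu1 hu2 hd => by
        have : Dd Λ f 1 < Dd Λ f v0 := Dd_lt_of_desc hu1 hu2 hd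
        omega)
    have hc0 : (⟨⟨s, hs⟩, (0, 0)⟩ : CellT k) = cellOf hk Λ f v0 :=
      cellOf_unique hf (Finset.mem_Icc.2 hv0m) (mem_cellsF.2 h00) rfl
    rw [← hc0] at hchain
    have hrow := cellOf_one_row (hk := hk) hΛ hf hpos
    rw [ckey, ckey, Prod.Lex.le_iff] at hchain
    simp only [contentZ, hrow, ofLex_toLex] at hchain
    rcases hchain with h | h
    · exfalso; omega
    · exact h.2
  -- conclude
  have hSφ : sInf {s : ℕ | ∃ hs : s < k, ∃ x ∈ Λ ⟨s, hs⟩, phi Λ (α', f) ⟨s, hs⟩ x = 1} = s₁ := by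
    apply le_antisymm (Nat.sInf_le hmemφ)
    exact hlb _ (Nat.sInf_mem ⟨s₁, hmemφ⟩)
  rw [idxOne, idxOne, hSφ, hSf, csInf_singleton]

end Phi
section Std

variable {k : ℕ} {Λ : Fin k → Finset (ℕ × ℕ)}

/-- Rank of a cell w.r.t. the key order (1-based). -/
noncomputable def rankC (Λ : Fin k → Finset (ℕ × ℕ)) (g : Fin k → ℕ × ℕ → ℕ)
    (p : CellT k) : ℕ :=
  ((cellsF Λ).filter fun q => key g q < key g p).card + 1

/-- Standardization of a filling. -/
noncomputable def stdF (Λ : Fin k → Finset (ℕ × ℕ)) (g : Fin k → ℕ × ℕ → ℕ) :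
    Fin k → ℕ × ℕ → ℕ :=
  fun s x => if x ∈ Λ s then rankC Λ g ⟨s, x⟩ else 0

variable {g : Fin k → ℕ × ℕ → ℕ}

lemma stdF_apply {s : Fin k} {x : ℕ × ℕ} (hx : x ∈ Λ s) :
    stdF Λ g s x = rankC Λ g ⟨s, x⟩ := if_pos hx

lemma key_injOn (hΛ : ∀ s, IsLowerSet (↑(Λ s) : Set (ℕ × ℕ)))
    (hg : IsSSYTTuple Λ g) {p q : CellT k} (hp : p ∈ cellsF Λ) (hq : q ∈ cellsF Λ)
    (hkey : key g p = key g q) : p = q := by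
  obtain ⟨s, i, j⟩ := p
  obtain ⟨s', i', j'⟩ := q
  rw [mem_cellsF] at hp hq
  simp only at hp hq
  have h1 : g s (i, j) = g s' (i', j') ∧ contentZ (i, j) = contentZ (i', j') ∧
      (s : ℕ) = (s' : ℕ) := by
    have h' := toLex.injective hkey
    rw [Prod.mk.injEq] at h'
    have h'' := toLex.injective h'.2
    rw [Prod.mk.injEq] at h''
    exact ⟨h'.1, h''.1, h''.2⟩
  have hss : s = s' := Fin.val_injective h1.2.2
  subst hss
  have hcont := h1.2.1
  simp only [contentZ] at hcont
  rcases lt_trichotomy i i' with hii | hii | hii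
  · exact absurd h1.1 (by
      have hj : j < j' := by omega
      have hm3 : (i, j') ∈ Λ s := hΛ s (Prod.mk_le_mk.2 ⟨le_of_lt hii, le_refl _⟩) hq
      have ha := hg.2.2.1 s i j j' (le_of_lt hj) hp hm3
      have hb := hg.2.2.2 s i i' j' hii hm3 hq
      omega)
  · subst hii
    have : j = j' := by omega
    subst this
    rfl
  · exact absurd h1.1.symm (by
      have hj : j' < j := by omega
      have hm3 : (i', j) ∈ Λ s := hΛ s (Prod.mk_le_mk.2 ⟨le_of_lt hii, le_refl _⟩) hp
      have ha := hg.2.2.1 s i' j' j (le_of_lt hj) hq hm3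
      have hb := hg.2.2.2 s i' i j hii hm3 hp
      omega)

lemma rankC_lt_of_key_lt {p q : CellT k} (hp : p ∈ cellsF Λ)
    (hkey : key g p < key g q) : rankC Λ g p < rankC Λ g q := by
  have hsub : insert p ((cellsF Λ).filter fun r => key g r < key g p) ⊆
      (cellsF Λ).filter fun r => key g r < key g q := by
    intro r hr
    rcases Finset.mem_insert.1 hr with rfl | hr
    · exact Finset.mem_filter.2 ⟨hp, hkey⟩
    · obtain ⟨hr1, hr2⟩ := Finset.mem_filter.1 hr
      exact Finset.mem_filter.2 ⟨hr1, lt_trans hr2 hkey⟩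
  have hnot : p ∉ (cellsF Λ).filter fun r => key g r < key g p := by
    simp [Finset.mem_filter]
  have := Finset.card_le_card hsub
  rw [Finset.card_insert_of_notMem hnot] at this
  simp only [rankC]
  omega

lemma rankC_le_of_key_le {p q : CellT k} (hkey : key g p ≤ key g q) :
    rankC Λ g p ≤ rankC Λ g q := by
  have hsub : ((cellsF Λ).filter fun r => key g r < key g p) ⊆
      (cellsF Λ).filter fun r => key g r < key g q := by
    intro r hr
    obtain ⟨h1, h2⟩ := Finset.mem_filter.1 hr
    exact Finset.mem_filter.2 ⟨h1, lt_of_lt_of_le h2 hkey⟩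
  exact Nat.add_le_add_right (Finset.card_le_card hsub) 1

lemma key_lt_of_rankC_lt {p q : CellT k} (h : rankC Λ g p < rankC Λ g q) :
    key g p < key g q := by
  by_contra hc
  push_neg at hc
  exact absurd (rankC_le_of_key_le (Λ := Λ) hc) (by omega)

lemma rankC_injOn (hΛ : ∀ s, IsLowerSet (↑(Λ s) : Set (ℕ × ℕ)))
    (hg : IsSSYTTuple Λ g) {p q : CellT k} (hp : p ∈ cellsF Λ) (hq : q ∈ cellsF Λ)
    (h : rankC Λ g p = rankC Λ g q) : p = q := by
  rcases lt_trichotomy (key g p) (key g q) with hkey | hkey | hkey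
  · exact absurd h (Nat.ne_of_lt (rankC_lt_of_key_lt hp hkey))
  · exact key_injOn hΛ hg hp hq hkey
  · exact absurd h.symm (Nat.ne_of_lt (rankC_lt_of_key_lt hq hkey))

lemma rankC_mem_Icc {p : CellT k} (hp : p ∈ cellsF Λ) :
    rankC Λ g p ∈ Finset.Icc 1 (tot Λ) := by
  have hsub : ((cellsF Λ).filter fun q => key g q < key g p) ⊆ (cellsF Λ).erase p := by
    intro r hr
    obtain ⟨hr1, hr2⟩ := Finset.mem_filter.1 hr
    exact Finset.mem_erase.2 ⟨fun hre => by subst hre; exact lt_irrefl _ hr2, hr1⟩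
  have h1 := Finset.card_le_card hsub
  rw [Finset.card_erase_of_mem hp, card_cellsF] at h1
  have h2 : 1 ≤ (cellsF Λ).card := Finset.card_pos.2 ⟨p, hp⟩
  rw [card_cellsF] at h2
  simp only [rankC, Finset.mem_Icc, tot]
  omega

/-- The standardization of a semistandard tuple is a standard tuple. -/
lemma stdF_isSYT (hΛ : ∀ s, IsLowerSet (↑(Λ s) : Set (ℕ × ℕ)))
    (hg : IsSSYTTuple Λ g) : IsSYTTuple Λ (stdF Λ g) := by
  refine ⟨fun s x hx => if_neg hx, fun s x hx => ?_, ?_, ?_, ?_⟩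
  · rw [stdF_apply hx]
    exact rankC_mem_Icc (mem_cellsF.2 hx)
  · intro v hv
    have hv' : v ∈ Finset.Icc 1 (tot Λ) := hv
    have hsurj := Finset.surj_on_of_inj_on_of_card_le
      (s := cellsF Λ) (t := Finset.Icc 1 (tot Λ)) (fun p _ => rankC Λ g p)
      (fun p hp => rankC_mem_Icc hp)
      (fun p q hp hq he => rankC_injOn hΛ hg hp hq he)
      (by rw [Nat.card_Icc, card_cellsF]; simp [tot])
    obtain ⟨p, hp, hrank⟩ := hsurj v hv'
    refine ⟨(p.1, p.2), ⟨mem_cellsF.1 hp, ?_⟩, ?_⟩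
    · rw [stdF_apply (mem_cellsF.1 hp)]
      exact hrank.symm
    · rintro ⟨t, y⟩ ⟨hy, hsy⟩
      simp only at hy hsy
      rw [stdF_apply hy] at hsy
      have heq : (⟨t, y⟩ : CellT k) = p :=
        rankC_injOn hΛ hg (mem_cellsF.2 hy) hp (by rw [hsy, hrank])
      have h1 : t = p.1 := congrArg Sigma.fst heq
      have h2 : y = p.2 := congrArg Sigma.snd heq
      rw [h1, h2]
  · intro s i j1 j2 hj h1 h2
    rw [stdF_apply h1, stdF_apply h2]
    apply rankC_lt_of_key_lt (mem_cellsF.2 h1)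
    rw [key_lt_iff]
    rcases Nat.eq_or_lt_of_le (hg.2.2.1 s i j1 j2 (le_of_lt hj) h1 h2) with he | hlt
    · refine Or.inr ⟨he, ?_⟩
      rw [ckey, ckey, Prod.Lex.lt_iff]
      left
      simp only [contentZ, ofLex_toLex]
      omega
    · exact Or.inl hlt
  · intro s i1 i2 j hi h1 h2
    rw [stdF_apply h1, stdF_apply h2]
    apply rankC_lt_of_key_lt (mem_cellsF.2 h1)
    rw [key_lt_iff]
    exact Or.inl (hg.2.2.2 s i1 i2 j hi h1 h2)

end Std
section Comp

variable {k : ℕ} {Λ : Fin k → Finset (ℕ × ℕ)} {f g : Fin k → ℕ × ℕ → ℕ} {α' : ℕ → ℕ}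

lemma Dd_succ (Λ : Fin k → Finset (ℕ × ℕ)) (f : Fin k → ℕ × ℕ → ℕ) (v : ℕ) :
    Dd Λ f (v + 1) = Dd Λ f v + (if TupleDescent Λ f v then 1 else 0) := by
  simp only [Dd, Finset.range_add_one, Finset.filter_insert]
  split
  · rw [Finset.card_insert_of_notMem (by simp)]
  · rfl

lemma Ee_succ (hα0 : α' 0 = 0) (v : ℕ) :
    Ee Λ α' f (v + 1) = Ee Λ α' f v + (if TupleDescent Λ f v then 1 else 0) + α' v := by
  simp only [Ee, Dd_succ, Finset.sum_range_succ]
  omega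

/-- Key comparison under `φ` follows value comparison. -/
lemma key_phi_lt (hk : 0 < k) (hΛ : ∀ s, IsLowerSet (↑(Λ s) : Set (ℕ × ℕ)))
    (hf : IsSYTTuple Λ f) {p q : CellT k} (hp : p ∈ cellsF Λ) (hq : q ∈ cellsF Λ)
    (hlt : f p.1 p.2 < f q.1 q.2) :
    key (phi Λ (α', f)) p < key (phi Λ (α', f)) q := by
  have hm1 := f_mem_Icc Λ hf hp
  have hm2 := f_mem_Icc Λ hf hq
  simp only [Finset.mem_Icc] at hm1 hm2
  rw [key_lt_iff]
  rw [phi_apply (mem_cellsF.1 hp), phi_apply (mem_cellsF.1 hq)]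
  rcases Nat.eq_or_lt_of_le (Ee_mono (Λ := Λ) (α' := α') (f := f) (le_of_lt hlt))
    with hE | hE
  swap
  · exact Or.inl hE
  refine Or.inr ⟨hE, ?_⟩
  -- no descent strictly between the two values
  have hDd : Dd Λ f (f p.1 p.2) = Dd Λ f (f q.1 q.2) := by
    have h1 := Dd_mono (Λ := Λ) (f := f) (le_of_lt hlt)
    have h2 : ∑ u ∈ Finset.range (f p.1 p.2), α' u ≤
        ∑ u ∈ Finset.range (f q.1 q.2), α' u :=
      Finset.sum_le_sum_of_subset (Finset.range_subset_range.2 (le_of_lt hlt))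
    simp only [Ee] at hE
    omega
  have hchain := ckey_chain (hk := hk) hf hm1.1 (le_of_lt hlt) hm2.2
    (fun u hu1 hu2 => no_desc_of_Dd_eq hDd hu1 hu2)
  rw [← cellOf_unique (hk := hk) hf (Finset.mem_Icc.2 hm1) hp rfl,
    ← cellOf_unique (hk := hk) hf (Finset.mem_Icc.2 hm2) hq rfl] at hchain
  rcases lt_or_eq_of_le hchain with h | h
  · exact h
  -- equal ckey: same tableau, same content, derive a contradiction
  exfalso
  obtain ⟨s, i, j⟩ := p
  obtain ⟨s', i', j'⟩ := q
  rw [mem_cellsF] at hp hq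
  simp only at hp hq hlt hE hm1 hm2
  have h' := toLex.injective h
  rw [Prod.mk.injEq] at h'
  have hss : s = s' := Fin.val_injective h'.2
  subst hss
  have hcont := h'.1
  simp only [contentZ] at hcont
  rcases lt_trichotomy i i' with hii | hii | hii
  · -- row then strict column: Ee must strictly increase, contradiction
    have hj : j < j' := by omega
    have hm3 : (i, j') ∈ Λ s := hΛ s (Prod.mk_le_mk.2 ⟨le_of_lt hii, le_refl _⟩) hq
    have ha : f s (i, j) ≤ f s (i, j') :=
      le_of_lt (hf.2.2.2.1 s i j j' hj hp hm3)
    have hb := Ee_col_strict (α' := α') hk hf hii hm3 hq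
    have hc := Ee_mono (Λ := Λ) (α' := α') (f := f) ha
    omega
  · have hj : j = j' := by omega
    subst hii
    subst hj
    exact lt_irrefl _ hlt
  · -- the other order contradicts hlt
    have hj : j' < j := by omega
    have hm3 : (i', j) ∈ Λ s := hΛ s (Prod.mk_le_mk.2 ⟨le_of_lt hii, le_refl _⟩) hp
    have ha := hf.2.2.2.1 s i' j' j hj hq hm3
    have hb := hf.2.2.2.2 s i' i j hii hm3 hp
    omega

/-- Standardizing `φ` recovers the standard tuple. -/
lemma stdF_phi (hk : 0 < k) (hΛ : ∀ s, IsLowerSet (↑(Λ s) : Set (ℕ × ℕ)))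
    (hf : IsSYTTuple Λ f) : stdF Λ (phi Λ (α', f)) = f := by
  funext s x
  by_cases hx : x ∈ Λ s
  swap
  · rw [stdF, if_neg hx, hf.1 s x hx]
  rw [stdF_apply hx]
  set p : CellT k := ⟨s, x⟩ with hpdef
  have hp : p ∈ cellsF Λ := mem_cellsF.2 hx
  have hm := f_mem_Icc Λ hf hp
  simp only [Finset.mem_Icc] at hm
  have hfv : f p.1 p.2 = f s x := rfl
  have hfilter : ((cellsF Λ).filter fun q => key (phi Λ (α', f)) q < key (phi Λ (α', f)) p)
      = (cellsF Λ).filter fun q => f q.1 q.2 < f p.1 p.2 := by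
    apply Finset.filter_congr
    intro q hq
    constructor
    · intro hkey
      rcases lt_trichotomy (f q.1 q.2) (f p.1 p.2) with h | h | h
      · exact h
      · exfalso
        have : q = p := f_injOn hf hq hp h
        subst this
        exact lt_irrefl _ hkey
      · exact absurd (key_phi_lt (α' := α') hk hΛ hf hp hq h) (by
          intro hc; exact lt_irrefl _ (lt_trans hkey hc))
    · intro h
      exact key_phi_lt (α' := α') hk hΛ hf hq hp h
  rw [rankC, hfilter]
  have hcard : ((cellsF Λ).filter fun q => f q.1 q.2 < f p.1 p.2).card
      = f p.1 p.2 - 1 := by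
    rw [show f p.1 p.2 - 1 = (Finset.Icc 1 (f p.1 p.2 - 1)).card by
      rw [Nat.card_Icc]; omega]
    apply Finset.card_bij (fun q _ => f q.1 q.2)
    · intro q hq
      obtain ⟨hq1, hq2⟩ := Finset.mem_filter.1 hq
      have := f_mem_Icc Λ hf hq1
      simp only [Finset.mem_Icc] at this
      rw [Finset.mem_Icc]
      omega
    · intro q1 hq1 q2 hq2 he
      exact f_injOn hf (Finset.mem_filter.1 hq1).1 (Finset.mem_filter.1 hq2).1 he
    · intro u hu
      rw [Finset.mem_Icc] at hu
      have hu' : u ∈ Finset.Icc 1 (tot Λ) := Finset.mem_Icc.2 ⟨hu.1, by omega⟩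
      obtain ⟨hc1, hc2⟩ := cellOf_spec (hk := hk) hf hu'
      exact ⟨cellOf hk Λ f u, Finset.mem_filter.2 ⟨hc1, by omega⟩, hc2⟩
  rw [hcard]
  omega

end Comp
section Inv

variable {k : ℕ} {Λ : Fin k → Finset (ℕ × ℕ)} {g f : Fin k → ℕ × ℕ → ℕ}

/-- Value of `g` on the cell of rank `v`. -/
noncomputable def gval (hk : 0 < k) (Λ : Fin k → Finset (ℕ × ℕ))
    (g : Fin k → ℕ × ℕ → ℕ) (v : ℕ) : ℕ :=
  g (cellOf hk Λ (stdF Λ g) v).1 (cellOf hk Λ (stdF Λ g) v).2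

/-- The gap sequence recovered from a semistandard tuple. -/
noncomputable def alphaOf (hk : 0 < k) (Λ : Fin k → Finset (ℕ × ℕ))
    (g : Fin k → ℕ × ℕ → ℕ) : ℕ → ℕ :=
  fun u =>
    if u = 0 ∨ tot Λ ≤ u then 0
    else gval hk Λ g (u + 1) - gval hk Λ g u -
      (if TupleDescent Λ (stdF Λ g) u then 1 else 0)

lemma alphaOf_zero (hk : 0 < k) : alphaOf hk Λ g 0 = 0 := by
  simp [alphaOf]

lemma g_le_of_key_le {p q : CellT k} (h : key g p ≤ key g q) :
    g p.1 p.2 ≤ g q.1 q.2 := by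
  rw [key, key, Prod.Lex.le_iff] at h
  rcases h with h | h
  · exact le_of_lt h
  · exact le_of_eq h.1

variable (hk : 0 < k)

/-- `g`-values are monotone along ranks. -/
lemma gval_le (hΛ : ∀ s, IsLowerSet (↑(Λ s) : Set (ℕ × ℕ)))
    (hg : IsSSYTTuple Λ g) (v : ℕ) (h1 : 1 ≤ v) (h2 : v + 1 ≤ tot Λ) :
    gval hk Λ g v ≤ gval hk Λ g (v + 1) := by
  have hstd := stdF_isSYT hΛ hg
  have hv : v ∈ Finset.Icc 1 (tot Λ) := Finset.mem_Icc.2 ⟨h1, by omega⟩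
  have hv1 : v + 1 ∈ Finset.Icc 1 (tot Λ) := Finset.mem_Icc.2 ⟨by omega, h2⟩
  obtain ⟨hc1, hc2⟩ := cellOf_spec (hk := hk) hstd hv
  obtain ⟨hd1, hd2⟩ := cellOf_spec (hk := hk) hstd hv1
  have hrank1 : rankC Λ g (cellOf hk Λ (stdF Λ g) v) = v := by
    rw [← stdF_apply (mem_cellsF.1 hc1)]; exact hc2
  have hrank2 : rankC Λ g (cellOf hk Λ (stdF Λ g) (v + 1)) = v + 1 := by
    rw [← stdF_apply (mem_cellsF.1 hd1)]; exact hd2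
  apply g_le_of_key_le
  apply le_of_lt
  apply key_lt_of_rankC_lt (Λ := Λ)
  omega

/-- At a descent of the standardization the `g`-value strictly increases. -/
lemma gval_lt_of_desc (hΛ : ∀ s, IsLowerSet (↑(Λ s) : Set (ℕ × ℕ)))
    (hg : IsSSYTTuple Λ g) (v : ℕ) (h1 : 1 ≤ v) (h2 : v + 1 ≤ tot Λ)
    (hd : TupleDescent Λ (stdF Λ g) v) :
    gval hk Λ g v < gval hk Λ g (v + 1) := by
  have hstd := stdF_isSYT hΛ hg
  have hv : v ∈ Finset.Icc 1 (tot Λ) := Finset.mem_Icc.2 ⟨h1, by omega⟩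
  have hv1 : v + 1 ∈ Finset.Icc 1 (tot Λ) := Finset.mem_Icc.2 ⟨by omega, h2⟩
  obtain ⟨hc1, hc2⟩ := cellOf_spec (hk := hk) hstd hv
  obtain ⟨hd1, hd2⟩ := cellOf_spec (hk := hk) hstd hv1
  have hrank1 : rankC Λ g (cellOf hk Λ (stdF Λ g) v) = v := by
    rw [← stdF_apply (mem_cellsF.1 hc1)]; exact hc2
  have hrank2 : rankC Λ g (cellOf hk Λ (stdF Λ g) (v + 1)) = v + 1 := by
    rw [← stdF_apply (mem_cellsF.1 hd1)]; exact hd2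
  have hkey : key g (cellOf hk Λ (stdF Λ g) v) < key g (cellOf hk Λ (stdF Λ g) (v + 1)) :=
    key_lt_of_rankC_lt (Λ := Λ) (by omega)
  have hck := (desc_iff (hk := hk) hstd h1 h2).1 hd
  rw [key, key, Prod.Lex.lt_iff] at hkey
  rcases hkey with h | h
  · exact h
  · exfalso
    exact absurd hck (not_lt_of_gt h.2)

/-- The first `g`-value is `1`. -/
lemma gval_one (hΛ : ∀ s, IsLowerSet (↑(Λ s) : Set (ℕ × ℕ)))
    (hg : IsSSYTTuple Λ g) (hg1 : ∃ s x, x ∈ Λ s ∧ g s x = 1) (hpos : 1 ≤ tot Λ) : gval hk Λ g 1 = 1 := by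
  have hstd := stdF_isSYT hΛ hg
  have hv : (1 : ℕ) ∈ Finset.Icc 1 (tot Λ) := Finset.mem_Icc.2 ⟨le_refl _, hpos⟩
  obtain ⟨hc1, hc2⟩ := cellOf_spec (hk := hk) hstd hv
  have hrank1 : rankC Λ g (cellOf hk Λ (stdF Λ g) 1) = 1 := by
    rw [← stdF_apply (mem_cellsF.1 hc1)]; exact hc2
  -- the filter is empty, so the key is minimal
  have hmin : ∀ q ∈ cellsF Λ, key g (cellOf hk Λ (stdF Λ g) 1) ≤ key g q := by
    intro q hq
    by_contra hcon
    push_neg at hcon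
    have : q ∈ (cellsF Λ).filter fun r => key g r < key g (cellOf hk Λ (stdF Λ g) 1) :=
      Finset.mem_filter.2 ⟨hq, hcon⟩
    have hcard : ((cellsF Λ).filter fun r =>
        key g r < key g (cellOf hk Λ (stdF Λ g) 1)).card = 0 := by
      simp only [rankC] at hrank1; omega
    rw [Finset.card_eq_zero] at hcard
    rw [hcard] at this
    exact absurd this (Finset.notMem_empty q)
  obtain ⟨s, x, hx, hgx⟩ := hg1
  have h1 := g_le_of_key_le (hmin ⟨s, x⟩ (mem_cellsF.2 hx))
  rw [hgx] at h1
  have h2 := hg.2.1 _ _ (mem_cellsF.1 hc1)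
  exact le_antisymm h1 h2

/-- The fundamental telescoping identity: `Ee` recovers the `g`-values. -/
lemma Ee_gval (hΛ : ∀ s, IsLowerSet (↑(Λ s) : Set (ℕ × ℕ)))
    (hg : IsSSYTTuple Λ g) (hg1 : ∃ s x, x ∈ Λ s ∧ g s x = 1)
    (hpos : 1 ≤ tot Λ) (v : ℕ) (h1 : 1 ≤ v) (h2 : v ≤ tot Λ) :
    Ee Λ (alphaOf hk Λ g) (stdF Λ g) v = gval hk Λ g v := by
  induction v, h1 using Nat.le_induction with
  | base =>
    rw [Ee_one (stdF_isSYT hΛ hg) (alphaOf_zero hk), gval_one hk hΛ hg hg1 hpos]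
  | succ v hv ih =>
    have hih := ih (by omega)
    rw [Ee_succ (alphaOf_zero hk), hih]
    have hle := gval_le hk hΛ hg v hv h2
    have hα : alphaOf hk Λ g v = gval hk Λ g (v + 1) - gval hk Λ g v -
        (if TupleDescent Λ (stdF Λ g) v then 1 else 0) := by
      rw [alphaOf, if_neg (by omega)]
    rw [hα]
    split
    case isTrue hd =>
      have := gval_lt_of_desc hk hΛ hg v hv h2 hd
      omega
    case isFalse hd =>
      omega

/-- `φ` applied to the standardization and gap sequence recovers `g`. -/
lemma phi_stdF (hΛ : ∀ s, IsLowerSet (↑(Λ s) : Set (ℕ × ℕ)))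
    (hg : IsSSYTTuple Λ g) (hg1 : ∃ s x, x ∈ Λ s ∧ g s x = 1)
    (hpos : 1 ≤ tot Λ) :
    phi Λ (alphaOf hk Λ g, stdF Λ g) = g := by
  funext s x
  by_cases hx : x ∈ Λ s
  swap
  · rw [phi_apply_not hx, hg.1 s x hx]
  rw [phi_apply hx]
  have hstd := stdF_isSYT hΛ hg
  have hmem : stdF Λ g s x ∈ Finset.Icc 1 (tot Λ) := by
    rw [stdF_apply hx]
    exact rankC_mem_Icc (mem_cellsF.2 hx)
  simp only [Finset.mem_Icc] at hmem
  rw [Ee_gval hk hΛ hg hg1 hpos _ hmem.1 hmem.2]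
  have hcell : (⟨s, x⟩ : CellT k) = cellOf hk Λ (stdF Λ g) (stdF Λ g s x) :=
    cellOf_unique (hk := hk) hstd (Finset.mem_Icc.2 hmem) (mem_cellsF.2 hx) rfl
  rw [gval, ← hcell]

/-- The gap sequence of `φ` recovers the original `α`. -/
lemma alphaOf_phi (hΛ : ∀ s, IsLowerSet (↑(Λ s) : Set (ℕ × ℕ)))
    {α' : ℕ → ℕ} (hα0 : α' 0 = 0) (hf : IsSYTTuple Λ f) (u : ℕ)
    (hu1 : 1 ≤ u) (hu2 : u + 1 ≤ tot Λ) :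
    alphaOf hk Λ (phi Λ (α', f)) u = α' u := by
  have hstd : stdF Λ (phi Λ (α', f)) = f := stdF_phi (α' := α') hk hΛ hf
  have hval : ∀ v, v ∈ Finset.Icc 1 (tot Λ) →
      gval hk Λ (phi Λ (α', f)) v = Ee Λ α' f v := by
    intro v hv
    rw [gval, hstd]
    obtain ⟨hc1, hc2⟩ := cellOf_spec (hk := hk) hf hv
    rw [phi_apply (mem_cellsF.1 hc1), hc2]
  rw [alphaOf, if_neg (by omega), hstd,
    hval u (Finset.mem_Icc.2 ⟨hu1, by omega⟩),
    hval (u + 1) (Finset.mem_Icc.2 ⟨by omega, hu2⟩),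
    Ee_succ hα0]
  split <;> omega

end Inv
section MainEquiv

variable {k : ℕ} {Λ : Fin k → Finset (ℕ × ℕ)}

/-- Extension of a finite tuple to `ℕ`, shifted by one, `0` at `0`. -/
def extA (m : ℕ) (α : Fin m → ℕ) : ℕ → ℕ :=
  fun u => if h : u - 1 < m ∧ u ≠ 0 then α ⟨u - 1, h.1⟩ else 0

lemma extA_zero (m : ℕ) (α : Fin m → ℕ) : extA m α 0 = 0 := by
  simp [extA]

lemma extA_succ (m : ℕ) (α : Fin m → ℕ) (i : Fin m) : extA m α (i + 1) = α i := by
  have h : (i : ℕ) + 1 - 1 < m ∧ (i : ℕ) + 1 ≠ 0 := ⟨by simpa using i.isLt, by omega⟩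
  rw [extA, dif_pos h]
  exact congrArg α (Fin.ext rfl)

lemma sum_extA (m : ℕ) (α : Fin m → ℕ) :
    ∑ u ∈ Finset.range (m + 1), extA m α u = ∑ i, α i := by
  rw [Finset.sum_range_succ', extA_zero, add_zero]
  have h1 : ∀ u ∈ Finset.range m, extA m α (u + 1) =
      (fun u => if h : u < m then α ⟨u, h⟩ else 0) u := by
    intro u hu
    rw [Finset.mem_range] at hu
    simp only [extA]
    rw [dif_pos (show u + 1 - 1 < m ∧ u + 1 ≠ 0 from ⟨by omega, by omega⟩),
      dif_pos hu]
    exact congrArg α (Fin.ext rfl)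
  rw [Finset.sum_congr rfl h1, ← Fin.sum_univ_eq_sum_range]
  apply Finset.sum_congr rfl
  intro i _
  show (if h : (i : ℕ) < m then α ⟨(i : ℕ), h⟩ else 0) = α i
  rw [dif_pos i.isLt]

lemma phi_congr {f : Fin k → ℕ × ℕ → ℕ} {α' α'' : ℕ → ℕ} (hf : IsSYTTuple Λ f)
    (h : ∀ u, u < tot Λ → α' u = α'' u) :
    phi Λ (α', f) = phi Λ (α'', f) := by
  funext s x
  by_cases hx : x ∈ Λ s
  swap
  · rw [phi_apply_not hx, phi_apply_not hx]
  rw [phi_apply hx, phi_apply hx, Ee, Ee]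
  have hm := hf.2.1 s x hx
  simp only [Finset.mem_Icc] at hm
  congr 1
  apply Finset.sum_congr rfl
  intro u hu
  rw [Finset.mem_range] at hu
  exact h u (by have := hm.2; change _ ≤ tot Λ at this; omega)

variable (hk : 0 < k) (hΛ : ∀ s, IsLowerSet (↑(Λ s) : Set (ℕ × ℕ)))
  (hpos : 1 ≤ tot Λ)

/-- The main bijection: pairs (SYT tuple, gap vector) ↔ SSYT tuples with a 1. -/
noncomputable def mainEquiv :
    ({f : Fin k → ℕ × ℕ → ℕ // IsSYTTuple Λ f} × (Fin (tot Λ - 1) → ℕ)) ≃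
      {g : Fin k → ℕ × ℕ → ℕ // IsSSYTTuple Λ g ∧ ∃ s x, x ∈ Λ s ∧ g s x = 1} where
  toFun p := ⟨phi Λ (extA (tot Λ - 1) p.2, p.1.1),
    phi_isSSYT hk p.1.2,
    phi_has_one hk p.1.2 (extA_zero _ _) hpos⟩
  invFun g := (⟨stdF Λ g.1, stdF_isSYT hΛ g.2.1⟩,
    fun i => alphaOf hk Λ g.1 ((i : ℕ) + 1))
  left_inv p := by
    obtain ⟨⟨f, hf⟩, α⟩ := p
    have hstd : stdF Λ (phi Λ (extA (tot Λ - 1) α, f)) = f :=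
      stdF_phi (α' := extA (tot Λ - 1) α) hk hΛ hf
    refine Prod.ext (Subtype.ext hstd) ?_
    funext i
    have hi : (i : ℕ) < tot Λ - 1 := i.isLt
    have := alphaOf_phi hk hΛ (α' := extA (tot Λ - 1) α) (extA_zero _ _) hf
      ((i : ℕ) + 1) (by omega) (by omega)
    simp only at this ⊢
    rw [this, extA_succ]
  right_inv g := by
    obtain ⟨g, hg, hg1⟩ := g
    refine Subtype.ext ?_
    have hcong : phi Λ (extA (tot Λ - 1) (fun i => alphaOf hk Λ g ((i : ℕ) + 1)),
        stdF Λ g) = phi Λ (alphaOf hk Λ g, stdF Λ g) := by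
      apply phi_congr (stdF_isSYT hΛ hg)
      intro u hu
      rcases Nat.eq_zero_or_pos u with rfl | hu1
      · rw [extA_zero, alphaOf_zero]
      · have h : u - 1 < tot Λ - 1 ∧ u ≠ 0 := ⟨by omega, by omega⟩
        rw [extA, dif_pos h]
        simp only
        congr 1
        omega
    simp only
    rw [hcong, phi_stdF hk hΛ hg hg1 hpos]

/-- Statistic of the image of the main bijection. -/
lemma mainEquiv_stat (p : {f : Fin k → ℕ × ℕ → ℕ // IsSYTTuple Λ f} × (Fin (tot Λ - 1) → ℕ)) :
    k * (maxEntry Λ (mainEquiv hk hΛ hpos p).1 - 1) + idxOne Λ (mainEquiv hk hΛ hpos p).1 =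
      (k * (tupleDES Λ p.1.1).card + idxOne Λ p.1.1) + k * ∑ i, p.2 i := by
  obtain ⟨⟨f, hf⟩, α⟩ := p
  have hmax : maxEntry Λ (phi Λ (extA (tot Λ - 1) α, f)) =
      Ee Λ (extA (tot Λ - 1) α) f (tot Λ) :=
    phi_maxEntry hk hf hpos
  have hidx : idxOne Λ (phi Λ (extA (tot Λ - 1) α, f)) = idxOne Λ f :=
    phi_idxOne hk hΛ hf (extA_zero _ _) hpos
  have hDES : Dd Λ f (tot Λ) = (tupleDES Λ f).card := rfl
  have hsum : ∑ u ∈ Finset.range (tot Λ), extA (tot Λ - 1) α u = ∑ i, α i := by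
    have h : Finset.range (tot Λ) = Finset.range ((tot Λ - 1) + 1) := by
      congr 1; omega
    rw [h, sum_extA]
  show k * (maxEntry Λ (phi Λ (extA (tot Λ - 1) α, f)) - 1) +
      idxOne Λ (phi Λ (extA (tot Λ - 1) α, f)) = _
  rw [hmax, hidx, Ee, hDES, hsum]
  have h2 : 1 + (tupleDES Λ f).card + ∑ i, α i - 1 =
      (tupleDES Λ f).card + ∑ i, α i := by omega
  rw [h2, Nat.mul_add]
  ring

end MainEquiv
section Counting

variable {k : ℕ}

lemma finite_syt (Λ : Fin k → Finset (ℕ × ℕ)) :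
    Finite {f : Fin k → ℕ × ℕ → ℕ // IsSYTTuple Λ f} := by
  have hinj : Function.Injective
      (fun (T : {f : Fin k → ℕ × ℕ → ℕ // IsSYTTuple Λ f})
        (p : ↑(cellsF Λ)) => ((⟨T.1 (p : CellT k).1 (p : CellT k).2, by
          have := f_mem_Icc Λ T.2 p.2
          simp only [Finset.mem_Icc] at this
          omega⟩ : Fin (tot Λ + 1)))) := by
    intro T1 T2 he
    apply Subtype.ext
    funext s x
    by_cases hx : x ∈ Λ s
    · have h := congrFun he ⟨⟨s, x⟩, mem_cellsF.2 hx⟩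
      exact congrArg Fin.val h
    · rw [T1.2.1 s x hx, T2.2.1 s x hx]
  exact Finite.of_injective _ hinj

lemma finite_tuple (hk : 0 < k) (m y : ℕ) :
    Finite {α : Fin m → ℕ // k * ∑ i, α i = y} := by
  have hinj : Function.Injective
      (fun (α : {α : Fin m → ℕ // k * ∑ i, α i = y}) (i : Fin m) =>
        (⟨α.1 i, by
          have h1 : α.1 i ≤ ∑ j, α.1 j :=
            Finset.single_le_sum (fun j _ => Nat.zero_le _) (Finset.mem_univ i)
          have h2 : ∑ j, α.1 j ≤ k * ∑ j, α.1 j := Nat.le_mul_of_pos_left _ hk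
          have h3 := α.2
          omega⟩ : Fin (y + 1))) := by
    intro α1 α2 he
    apply Subtype.ext
    funext i
    have := congrFun he i
    exact congrArg Fin.val this
  exact Finite.of_injective _ hinj

lemma card_mulvar (hk : 0 < k) (y : ℕ) :
    Nat.card {j : ℕ // k * j = y} = if k ∣ y then 1 else 0 := by
  split_ifs with hdvd
  · obtain ⟨c, rfl⟩ := hdvd
    haveI : Unique {j : ℕ // k * j = k * c} :=
      { default := ⟨c, rfl⟩
        uniq := fun j => Subtype.ext (Nat.eq_of_mul_eq_mul_left hk j.2) }
    exact Nat.card_unique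
  · haveI : IsEmpty {j : ℕ // k * j = y} := ⟨fun j => hdvd ⟨j.1, j.2.symm⟩⟩
    exact Nat.card_of_isEmpty

/-- Counting a sum-condition by splitting along the antidiagonal. -/
lemma split_count {A B : Type*} (u : A → ℕ) (v : B → ℕ)
    (hfA : ∀ x, Finite {a : A // u a = x}) (hfB : ∀ y, Finite {b : B // v b = y})
    (d : ℕ) :
    Nat.card {p : A × B // u p.1 + v p.2 = d} =
      ∑ xy ∈ Finset.HasAntidiagonal.antidiagonal d,
        Nat.card {a : A // u a = xy.1} * Nat.card {b : B // v b = xy.2} := by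
  have e : {p : A × B // u p.1 + v p.2 = d} ≃
      Σ xy : ↑(Finset.HasAntidiagonal.antidiagonal d),
        ({a : A // u a = (xy : ℕ × ℕ).1} × {b : B // v b = (xy : ℕ × ℕ).2}) :=
    { toFun := fun p => ⟨⟨(u p.1.1, v p.1.2), Finset.HasAntidiagonal.mem_antidiagonal.2 p.2⟩,
        ⟨p.1.1, rfl⟩, ⟨p.1.2, rfl⟩⟩
      invFun := fun q => ⟨(q.2.1.1, q.2.2.1), by
        rw [q.2.1.2, q.2.2.2]
        exact Finset.HasAntidiagonal.mem_antidiagonal.1 q.1.2⟩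
      left_inv := fun p => rfl
      right_inv := by
        rintro ⟨⟨⟨x, y⟩, hxy⟩, ⟨a, ha⟩, ⟨b, hb⟩⟩
        simp only at ha hb
        subst ha
        subst hb
        rfl }
  rw [Nat.card_congr e]
  haveI : ∀ xy : ↑(Finset.HasAntidiagonal.antidiagonal d),
      Fintype ({a : A // u a = (xy : ℕ × ℕ).1} × {b : B // v b = (xy : ℕ × ℕ).2}) := by
    intro xy
    haveI := hfA (xy : ℕ × ℕ).1
    haveI := hfB (xy : ℕ × ℕ).2
    haveI : Fintype {a : A // u a = (xy : ℕ × ℕ).1} := Fintype.ofFinite _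
    haveI : Fintype {b : B // v b = (xy : ℕ × ℕ).2} := Fintype.ofFinite _
    infer_instance
  rw [Nat.card_eq_fintype_card, Fintype.card_sigma]
  rw [← Finset.sum_coe_sort (Finset.HasAntidiagonal.antidiagonal d)
    (fun xy => Nat.card {a : A // u a = xy.1} * Nat.card {b : B // v b = xy.2})]
  apply Finset.sum_congr rfl
  intro xy _
  haveI := hfA (xy : ℕ × ℕ).1
  haveI := hfB (xy : ℕ × ℕ).2
  rw [← Nat.card_eq_fintype_card, Nat.card_prod]

/-- Geometric series in `X^k`. -/
noncomputable def geomK (k : ℕ) : PowerSeries ℤ :=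
  PowerSeries.mk fun n => if k ∣ n then 1 else 0

lemma geomK_inv (hk : 0 < k) :
    (1 - (PowerSeries.X : PowerSeries ℤ) ^ k) * geomK k = 1 := by
  have hexp : (1 - (PowerSeries.X : PowerSeries ℤ) ^ k) * geomK k =
      geomK k - geomK k * PowerSeries.X ^ k := by ring
  rw [hexp]
  ext n
  rw [map_sub, PowerSeries.coeff_mul_X_pow', PowerSeries.coeff_one]
  simp only [geomK, PowerSeries.coeff_mk]
  by_cases hn : n = 0
  · subst hn
    rw [if_pos (dvd_zero k), if_neg (by omega), if_pos rfl]
    ring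
  · rw [if_neg hn]
    by_cases hkn : k ≤ n
    · rw [if_pos hkn]
      by_cases hdvd : k ∣ n
      · rw [if_pos hdvd, if_pos (Nat.dvd_sub hdvd dvd_rfl)]
        ring
      · rw [if_neg hdvd, if_neg (fun hc => hdvd (by
          have : n - k + k = n := by omega
          rw [← this]
          exact dvd_add hc dvd_rfl))]
        ring
    · rw [if_neg hkn, if_neg (fun hdvd => hn
        (Nat.eq_zero_of_dvd_of_lt hdvd (by omega)))]
      ring

/-- The generating series of gap vectors of length `m`. -/
noncomputable def Gm (k m : ℕ) : PowerSeries ℤ :=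
  PowerSeries.mk fun b => (Nat.card {α : Fin m → ℕ // k * ∑ i, α i = b} : ℤ)

lemma Gm_succ (hk : 0 < k) (m : ℕ) : Gm k (m + 1) = Gm k m * geomK k := by
  ext b
  rw [PowerSeries.coeff_mul]
  simp only [Gm, geomK, PowerSeries.coeff_mk]
  have e : {α : Fin (m + 1) → ℕ // k * ∑ i, α i = b} ≃
      {p : (Fin m → ℕ) × ℕ // (k * ∑ i, p.1 i) + k * p.2 = b} :=
    { toFun := fun α => ⟨(Fin.init α.1, α.1 (Fin.last m)), by
        simp only [Fin.init]
        rw [← Nat.mul_add, ← Fin.sum_univ_castSucc]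
        exact α.2⟩
      invFun := fun p => ⟨Fin.snoc p.1.1 p.1.2, by
        rw [Fin.sum_univ_castSucc]
        simp only [Fin.snoc_castSucc, Fin.snoc_last]
        rw [Nat.mul_add]
        exact p.2⟩
      left_inv := fun α => Subtype.ext (Fin.snoc_init_self α.1)
      right_inv := fun p => Subtype.ext (Prod.ext (funext fun i => by
        simp [Fin.init_snoc]) (by simp)) }
  rw [Nat.card_congr e,
    split_count (fun β : Fin m → ℕ => k * ∑ i, β i) (fun j : ℕ => k * j)
      (fun x => finite_tuple hk m x) (fun y => by
        haveI : Subsingleton {j : ℕ // k * j = y} :=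
          ⟨fun a b => Subtype.ext (Nat.eq_of_mul_eq_mul_left hk (a.2.trans b.2.symm))⟩
        infer_instance) b]
  push_cast
  apply Finset.sum_congr rfl
  intro xy _
  rw [card_mulvar hk xy.2]
  split_ifs <;> push_cast <;> ring

lemma Gm_inv (hk : 0 < k) (m : ℕ) :
    (1 - (PowerSeries.X : PowerSeries ℤ) ^ k) ^ m * Gm k m = 1 := by
  induction m with
  | zero =>
    have hG : Gm k 0 = 1 := by
      ext b
      rw [PowerSeries.coeff_one]
      simp only [Gm, PowerSeries.coeff_mk]
      by_cases hb : b = 0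
      · subst hb
        haveI : Unique {α : Fin 0 → ℕ // k * ∑ i, α i = 0} :=
          { default := ⟨fun i => i.elim0, by simp⟩
            uniq := fun α => Subtype.ext (funext fun i => i.elim0) }
        rw [Nat.card_unique, if_pos rfl]
        norm_num
      · haveI : IsEmpty {α : Fin 0 → ℕ // k * ∑ i, α i = b} :=
          ⟨fun α => hb (by simpa using α.2.symm)⟩
        rw [Nat.card_of_isEmpty, if_neg hb]
        norm_num
    rw [hG, pow_zero, one_mul]
  | succ m ih =>
    rw [Gm_succ hk m, pow_succ]
    calc (1 - (PowerSeries.X : PowerSeries ℤ) ^ k) ^ m *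
        (1 - PowerSeries.X ^ k) * (Gm k m * geomK k)
        = ((1 - PowerSeries.X ^ k) ^ m * Gm k m) *
          ((1 - PowerSeries.X ^ k) * geomK k) := by ring
      _ = 1 := by rw [ih, geomK_inv hk, one_mul]

end Counting
section Master

theorem master_series (k : ℕ) (hk : 0 < k) (Λ : Fin k → Finset (ℕ × ℕ))
    (hΛ : ∀ s, IsLowerSet (↑(Λ s) : Set (ℕ × ℕ))) (hpos : 0 < tot Λ) :
    (∑ᶠ T : {f : Fin k → ℕ × ℕ → ℕ // IsSYTTuple Λ f},
        (PowerSeries.X : PowerSeries ℤ) ^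
          (k * (tupleDES Λ T.1).card + idxOne Λ T.1)) =
      (1 - (PowerSeries.X : PowerSeries ℤ) ^ k) ^ (tot Λ - 1) *
        PowerSeries.mk (fun d =>
          (Nat.card {g : Fin k → ℕ × ℕ → ℕ //
            (IsSSYTTuple Λ g ∧ ∃ s x, x ∈ Λ s ∧ g s x = 1) ∧
              k * (maxEntry Λ g - 1) + idxOne Λ g = d} : ℤ)) := by
  haveI : Finite {f : Fin k → ℕ × ℕ → ℕ // IsSYTTuple Λ f} := finite_syt Λ
  haveI : Fintype {f : Fin k → ℕ × ℕ → ℕ // IsSYTTuple Λ f} := Fintype.ofFinite _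
  have hpos' : 1 ≤ tot Λ := hpos
  -- Step 1: the left-hand side as a coefficient series
  have hLHS : (∑ᶠ T : {f : Fin k → ℕ × ℕ → ℕ // IsSYTTuple Λ f},
        (PowerSeries.X : PowerSeries ℤ) ^
          (k * (tupleDES Λ T.1).card + idxOne Λ T.1)) =
      PowerSeries.mk (fun a =>
        (Nat.card {T : {f : Fin k → ℕ × ℕ → ℕ // IsSYTTuple Λ f} //
          k * (tupleDES Λ T.1).card + idxOne Λ T.1 = a} : ℤ)) := by
    rw [finsum_eq_sum_of_fintype]
    ext d
    rw [PowerSeries.coeff_mk, map_sum]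
    simp only [PowerSeries.coeff_X_pow]
    rw [Finset.sum_boole]
    rw [Nat.card_eq_fintype_card, Fintype.card_subtype]
    congr 2
    apply Finset.filter_congr
    intro T _
    simp [eq_comm]
  -- Step 2: the right-hand series factors through the main bijection
  have hmkN : PowerSeries.mk (fun d =>
        (Nat.card {g : Fin k → ℕ × ℕ → ℕ //
          (IsSSYTTuple Λ g ∧ ∃ s x, x ∈ Λ s ∧ g s x = 1) ∧
            k * (maxEntry Λ g - 1) + idxOne Λ g = d} : ℤ)) =
      PowerSeries.mk (fun a =>
        (Nat.card {T : {f : Fin k → ℕ × ℕ → ℕ // IsSYTTuple Λ f} //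
          k * (tupleDES Λ T.1).card + idxOne Λ T.1 = a} : ℤ)) * Gm k (tot Λ - 1) := by
    ext d
    rw [PowerSeries.coeff_mul, PowerSeries.coeff_mk]
    have e1 : {g : Fin k → ℕ × ℕ → ℕ //
        (IsSSYTTuple Λ g ∧ ∃ s x, x ∈ Λ s ∧ g s x = 1) ∧
          k * (maxEntry Λ g - 1) + idxOne Λ g = d} ≃
        {q : {g : Fin k → ℕ × ℕ → ℕ // IsSSYTTuple Λ g ∧ ∃ s x, x ∈ Λ s ∧ g s x = 1} //
          k * (maxEntry Λ q.1 - 1) + idxOne Λ q.1 = d} :=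
      ⟨fun g => ⟨⟨g.1, g.2.1⟩, g.2.2⟩, fun q => ⟨q.1.1, q.1.2, q.2⟩,
        fun _ => rfl, fun _ => rfl⟩
    have e2 : {p : {f : Fin k → ℕ × ℕ → ℕ // IsSYTTuple Λ f} × (Fin (tot Λ - 1) → ℕ) //
          (k * (tupleDES Λ p.1.1).card + idxOne Λ p.1.1) + k * ∑ i, p.2 i = d} ≃
        {q : {g : Fin k → ℕ × ℕ → ℕ // IsSSYTTuple Λ g ∧ ∃ s x, x ∈ Λ s ∧ g s x = 1} //
          k * (maxEntry Λ q.1 - 1) + idxOne Λ q.1 = d} :=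
      Equiv.subtypeEquiv (mainEquiv hk hΛ hpos') (fun p => by
        rw [mainEquiv_stat hk hΛ hpos' p])
    rw [Nat.card_congr ((e1.trans e2.symm))]
    have hsplit := split_count
      (fun T : {f : Fin k → ℕ × ℕ → ℕ // IsSYTTuple Λ f} =>
        k * (tupleDES Λ T.1).card + idxOne Λ T.1)
      (fun α : Fin (tot Λ - 1) → ℕ => k * ∑ i, α i)
      (fun x => inferInstance) (fun y => finite_tuple hk _ y) d
    rw [hsplit]
    push_cast
    apply Finset.sum_congr rfl
    intro xy _
    rw [show ((PowerSeries.coeff xy.2) (Gm k (tot Λ - 1))) =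
      (Nat.card {α : Fin (tot Λ - 1) → ℕ // k * ∑ i, α i = xy.2} : ℤ) from
        PowerSeries.coeff_mk _ _,
      show ((PowerSeries.coeff xy.1) (PowerSeries.mk (fun a =>
        (Nat.card {T : {f : Fin k → ℕ × ℕ → ℕ // IsSYTTuple Λ f} //
          k * (tupleDES Λ T.1).card + idxOne Λ T.1 = a} : ℤ)))) =
      (Nat.card {T : {f : Fin k → ℕ × ℕ → ℕ // IsSYTTuple Λ f} //
          k * (tupleDES Λ T.1).card + idxOne Λ T.1 = xy.1} : ℤ) from
        PowerSeries.coeff_mk _ _]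
    try push_cast
    try ring
  rw [hLHS, hmkN]
  rw [show (1 - (PowerSeries.X : PowerSeries ℤ) ^ k) ^ (tot Λ - 1) *
      (PowerSeries.mk (fun a =>
        (Nat.card {T : {f : Fin k → ℕ × ℕ → ℕ // IsSYTTuple Λ f} //
          k * (tupleDES Λ T.1).card + idxOne Λ T.1 = a} : ℤ)) * Gm k (tot Λ - 1)) =
      ((1 - (PowerSeries.X : PowerSeries ℤ) ^ k) ^ (tot Λ - 1) * Gm k (tot Λ - 1)) *
        PowerSeries.mk (fun a =>
        (Nat.card {T : {f : Fin k → ℕ × ℕ → ℕ // IsSYTTuple Λ f} //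
          k * (tupleDES Λ T.1).card + idxOne Λ T.1 = a} : ℤ)) from by ring]
  rw [Gm_inv hk, one_mul]

end Master
/-- `(1/(1-t^k)^(ℓ-1)) Σ_𝒯 t^(k|DES 𝒯| + idx₁ 𝒯)
= Σ_𝔗 t^(k(max 𝔗 - 1) + idx₁ 𝔗)` as formal power series in `t`,
where `𝒯` runs over SYT-tuples and `𝔗` over SSYT-tuples of shapes `Λ`. -/
theorem syt_ssyt_tuple_series (k : ℕ) (hk : 0 < k)
    (Λ : Fin k → Finset (ℕ × ℕ))
    (hΛ : ∀ s, IsLowerSet (↑(Λ s) : Set (ℕ × ℕ)))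
    (ℓ : ℕ) (hℓ : ℓ = ∑ t, (Λ t).card) (hpos : 0 < ℓ) :
    (∑ᶠ T : {f : Fin k → ℕ × ℕ → ℕ // IsSYTTuple Λ f},
        (PowerSeries.X : PowerSeries ℤ) ^
          (k * (tupleDES Λ T.1).card + idxOne Λ T.1)) =
      (1 - (PowerSeries.X : PowerSeries ℤ) ^ k) ^ (ℓ - 1) *
        PowerSeries.mk (fun d =>
          (Nat.card {g : Fin k → ℕ × ℕ → ℕ //
            (IsSSYTTuple Λ g ∧ ∃ s x, x ∈ Λ s ∧ g s x = 1) ∧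
              k * (maxEntry Λ g - 1) + idxOne Λ g = d} : ℤ)) := by
  subst hℓ
  exact master_series k hk Λ hΛ hpos

end BorderStrips
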